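/- arXiv:2209.09158 — 7 statements merged into one kernel-verified Lean document; each statement's English description precedes it below -/
import Mathlib

section
/- If the support of an R-module E is Zariski closed, then Supp(E) = V(O(E)); consequently for any prime P, E_P = 0 if and only if there exists a ∈ R \ P with E_a = 0. -/
def odaSet (R : Type*) [CommRing R] (E : Type*) [AddCommGroup E] [Module R E] : Set R :=
  {a : R | Subsingleton (LocalizedModule (Submonoid.powers a) E)}

/-- If `a` is invertible localization-wise and `a ∉ p`, then `E_p = 0`. -/
lemma oda_subsingleton_localized
    {R : Type*} [CommRing R] {E : Type*} [AddCommGroup E] [Module R E]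
    {a : R} (ha : Subsingleton (LocalizedModule (Submonoid.powers a) E))
    {p : PrimeSpectrum R} (hap : a ∉ p.asIdeal) :
    Subsingleton (LocalizedModule p.asIdeal.primeCompl E) := by
  rw [LocalizedModule.subsingleton_iff] at ha ⊢
  intro m
  obtain ⟨r, hr, hrm⟩ := ha m
  obtain ⟨n, rfl⟩ := hr
  exact ⟨a ^ n, fun hn => hap (p.isPrime.mem_of_pow_mem n hn), hrm⟩

/-- If the basic open of `a` misses the support, then `E_a = 0`. -/
lemma subsingleton_of_basicOpen_disjoint
    {R : Type*} [CommRing R] {E : Type*} [AddCommGroup E] [Module R E]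
    {a : R}
    (ha : ∀ q : PrimeSpectrum R, a ∉ q.asIdeal → q ∉ Module.support R E) :
    Subsingleton (LocalizedModule (Submonoid.powers a) E) := by
  rw [LocalizedModule.subsingleton_iff]
  intro m
  have hrad : a ∈ (Submodule.span R {m}).annihilator.radical := by
    rw [Ideal.radical_eq_sInf, Ideal.mem_sInf]
    rintro J ⟨hJ1, hJ2⟩
    by_contra haJ
    have := ha ⟨J, hJ2⟩ haJ
    rw [Module.notMem_support_iff'] at this
    obtain ⟨r, hr, hrm⟩ := this m
    exact hr (hJ1 ((Submodule.mem_annihilator_span_singleton m r).mpr hrm))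
  obtain ⟨n, hn⟩ := hrad
  exact ⟨a ^ n, ⟨n, rfl⟩, (Submodule.mem_annihilator_span_singleton m _).mp hn⟩

theorem support_closed_eq_zeroLocus_oda
    (R : Type*) [CommRing R] (E : Type*) [AddCommGroup E] [Module R E]
    (h : IsClosed (Module.support R E)) :
    Module.support R E = PrimeSpectrum.zeroLocus (odaSet R E) ∧
    ∀ p : PrimeSpectrum R,
      (Subsingleton (LocalizedModule p.asIdeal.primeCompl E) ↔
        ∃ a ∉ p.asIdeal, Subsingleton (LocalizedModule (Submonoid.powers a) E)) := by
  have key : ∀ p : PrimeSpectrum R,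
      (Subsingleton (LocalizedModule p.asIdeal.primeCompl E) ↔
        ∃ a ∉ p.asIdeal, Subsingleton (LocalizedModule (Submonoid.powers a) E)) := by
    intro p
    constructor
    · intro hp
      have hp' : p ∈ (Module.support R E)ᶜ := by
        rw [Set.mem_compl_iff, Module.notMem_support_iff]; exact hp
      have : IsOpen (Module.support R E)ᶜ := h.isOpen_compl
      obtain ⟨-, ⟨a, rfl⟩, hpa, hsub⟩ :=
        PrimeSpectrum.isTopologicalBasis_basic_opens.exists_subset_of_mem_open hp' this
      refine ⟨a, ?_, subsingleton_of_basicOpen_disjoint fun q hq => hsub ?_⟩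
      · simpa [PrimeSpectrum.mem_basicOpen] using hpa
      · simpa [PrimeSpectrum.mem_basicOpen] using hq
    · rintro ⟨a, hap, ha⟩
      exact oda_subsingleton_localized ha hap
  refine ⟨?_, key⟩
  ext p
  rw [PrimeSpectrum.mem_zeroLocus, Module.mem_support_iff]
  constructor
  · intro hp a ha
    by_contra hap
    exact (not_nontrivial_iff_subsingleton.mpr (oda_subsingleton_localized ha hap)) hp
  · intro hsub
    by_contra hnt
    rw [not_nontrivial_iff_subsingleton] at hnt
    obtain ⟨a, hap, ha⟩ := (key p).mp hnt
    exact hap (hsub ha)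
end

section
/- If E is a module over an absolutely flat (von Neumann regular) ring R, then O(E) = ann(E), i.e. the Oda ideal equals the annihilator. -/
theorem oda_eq_annihilator_of_vonNeumannRegular
    (R : Type*) [CommRing R] (hR : ∀ a : R, ∃ b : R, a = a ^ 2 * b)
    (E : Type*) [AddCommGroup E] [Module R E] :
    odaSet R E = (Module.annihilator R E : Set R) := by
  ext a
  simp only [odaSet, Set.mem_setOf_eq, SetLike.mem_coe, Module.mem_annihilator,
    LocalizedModule.subsingleton_iff]
  constructor
  · intro h x
    obtain ⟨r, ⟨n, rfl⟩, hr⟩ := h x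
    obtain ⟨b, hb⟩ := hR a
    -- a = a^(n+1) * b^n for all n
    have key : ∀ n : ℕ, a = a ^ (n + 1) * b ^ n := by
      intro n
      induction n with
      | zero => simp
      | succ k ih =>
        calc a = a ^ 2 * b := hb
        _ = a * (a * b) := by ring
        _ = (a ^ (k + 1) * b ^ k) * (a * b) := by rw [← ih]
        _ = a ^ (k + 2) * b ^ (k + 1) := by ring
    rcases Nat.eq_zero_or_pos n with rfl | hn
    · simp only [pow_zero, one_smul] at hr; rw [hr, smul_zero]
    · obtain ⟨m, rfl⟩ := Nat.exists_eq_add_of_lt hn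
      have : a • x = (b ^ (m)) • (a ^ (m + 1)) • x := by
        rw [← smul_assoc, smul_eq_mul, mul_comm, ← key]
      rw [this]
      simp only [zero_add] at hr
      rw [hr, smul_zero]
  · intro h x
    exact ⟨a, ⟨1, pow_one a⟩, h x⟩
end

section
/- Let R → S be a ring morphism and E an S-module of finite type, viewed as an R-module by restriction of scalars. Then Supp_R(E) = V(O_R(E)), where O_R(E) = {a ∈ R | E_a = 0}; in particular Supp_R(E) is Zariski closed and O_R(E) = √(ann_R(E)). -/
lemma key_subsingleton_iff
    (R : Type*) [CommRing R] (S : Type*) [CommRing S] (f : R →+* S)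
    (E : Type*) [AddCommGroup E] [Module S E] [Module R E]
    (hcompat : ∀ (r : R) (x : E), r • x = f r • x)
    [Module.Finite S E] (T : Submonoid R) :
    Subsingleton (LocalizedModule T E) ↔ ∃ t ∈ T, t ∈ Module.annihilator R E := by
  classical
  rw [LocalizedModule.subsingleton_iff]
  constructor
  · intro H
    obtain ⟨s, hs⟩ := Module.Finite.fg_top (R := S) (M := E)
    choose t ht h0 using fun x : E ↦ H x
    refine ⟨∏ x ∈ s, t x, prod_mem fun x _ ↦ ht x, ?_⟩
    rw [Module.mem_annihilator]
    intro m
    -- the set of elements killed by the product is an S-submodule containing s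
    set P : R := ∏ x ∈ s, t x with hP
    have hcomm : ∀ (c : S) (x : E), P • (c • x) = c • (P • x) := by
      intro c x
      rw [hcompat, hcompat, smul_smul, smul_smul, mul_comm]
    let K : Submodule S E :=
      { carrier := {x | P • x = 0}
        add_mem' := fun {a b} ha hb ↦ by simp only [Set.mem_setOf_eq] at *; rw [smul_add, ha, hb, add_zero]
        zero_mem' := by simp
        smul_mem' := fun c x hx ↦ by
          simp only [Set.mem_setOf_eq] at *
          rw [hcomm, hx, smul_zero] }
    have hsK : (s : Set E) ⊆ K := by
      intro x hx
      show P • x = 0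
      have : P = t x * ∏ y ∈ s.erase x, t y := by
        rw [hP, ← Finset.prod_erase_mul _ _ hx, mul_comm]
      rw [this, mul_comm, mul_smul, h0, smul_zero]
    have : (⊤ : Submodule S E) ≤ K := by
      rw [← hs]; exact Submodule.span_le.mpr hsK
    exact this (Submodule.mem_top : m ∈ ⊤)
  · rintro ⟨t, htT, ht⟩ m
    exact ⟨t, htT, Module.mem_annihilator.mp ht m⟩

theorem support_afg_eq_zeroLocus_oda
    (R : Type*) [CommRing R] (S : Type*) [CommRing S] (f : R →+* S)
    (E : Type*) [AddCommGroup E] [Module S E] [Module R E]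
    (hcompat : ∀ (r : R) (x : E), r • x = f r • x)
    [Module.Finite S E] :
    Module.support R E = PrimeSpectrum.zeroLocus (odaSet R E) ∧
    IsClosed (Module.support R E) ∧
    odaSet R E = ((Module.annihilator R E).radical : Set R) := by
  have hoda : odaSet R E = ((Module.annihilator R E).radical : Set R) := by
    ext a
    rw [odaSet, Set.mem_setOf_eq, key_subsingleton_iff R S f E hcompat]
    constructor
    · rintro ⟨t, ⟨n, rfl⟩, ht⟩
      exact Ideal.mem_radical_iff.mpr ⟨n, ht⟩
    · rintro ⟨n, hn⟩
      exact ⟨a ^ n, ⟨n, rfl⟩, hn⟩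
  have hsupp : Module.support R E =
      PrimeSpectrum.zeroLocus (Module.annihilator R E : Set R) := by
    ext p
    rw [← not_iff_not, Module.notMem_support_iff,
      key_subsingleton_iff R S f E hcompat]
    simp only [PrimeSpectrum.mem_zeroLocus, Set.not_subset, SetLike.mem_coe]
    constructor
    · rintro ⟨t, htT, ht⟩
      exact ⟨t, ht, htT⟩
    · rintro ⟨t, ht, htp⟩
      exact ⟨t, htp, ht⟩
  have h1 : Module.support R E = PrimeSpectrum.zeroLocus (odaSet R E) := by
    rw [hsupp, hoda, PrimeSpectrum.zeroLocus_radical]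
  exact ⟨h1, h1 ▸ PrimeSpectrum.isClosed_zeroLocus _, hoda⟩
end

section
/- Let R ⊆ S be a ring extension with S an R-algebra of finite type generated by x₁,…,xₙ. Then Supp_R(S/R) = V(O(R,S)) where O(R,S) = {a ∈ R | R_a = S_a}; consequently for a prime P of R, R_P = S_P if and only if there exists a ∈ R \ P with R_a = S_a. -/
theorem support_quotient_eq_zeroLocus_oda_of_finiteType
    (R : Type*) [CommRing R] (S : Type*) [CommRing S] [Algebra R S]
    (hinj : Function.Injective (algebraMap R S))
    [Algebra.FiniteType R S] :
    Module.support R (S ⧸ LinearMap.range (Algebra.linearMap R S)) =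
      PrimeSpectrum.zeroLocus (odaSet R (S ⧸ LinearMap.range (Algebra.linearMap R S))) ∧
    ∀ p : PrimeSpectrum R,
      (Subsingleton (LocalizedModule p.asIdeal.primeCompl
          (S ⧸ LinearMap.range (Algebra.linearMap R S))) ↔
        ∃ a ∉ p.asIdeal, Subsingleton (LocalizedModule (Submonoid.powers a)
          (S ⧸ LinearMap.range (Algebra.linearMap R S)))) := by
  set N : Submodule R S := LinearMap.range (Algebra.linearMap R S) with hN
  have hNmul : ∀ x y : S, x ∈ N → y ∈ N → x * y ∈ N := by
    rintro _ _ ⟨r, rfl⟩ ⟨r', rfl⟩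
    exact ⟨r * r', by simp [Algebra.linearMap_apply, map_mul]⟩
  have key : ∀ p : PrimeSpectrum R,
      Subsingleton (LocalizedModule p.asIdeal.primeCompl (S ⧸ N)) →
      ∃ a ∉ p.asIdeal, Subsingleton (LocalizedModule (Submonoid.powers a) (S ⧸ N)) := by
    intro p hp
    classical
    rw [LocalizedModule.subsingleton_iff] at hp
    obtain ⟨t, ht⟩ := Algebra.FiniteType.out (R := R) (A := S)
    -- for each generator, pick r ∉ p with r • x ∈ N
    choose r hr hr0 using fun x : S => hp (Submodule.Quotient.mk x)
    refine ⟨∏ x ∈ t, r x, ?_, ?_⟩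
    · exact (p.asIdeal.primeCompl.prod_mem (fun x _ => hr x))
    · rw [LocalizedModule.subsingleton_iff]
      set a : R := ∏ x ∈ t, r x with ha
      have haN : ∀ x ∈ t, a • x ∈ N := by
        intro x hx
        have h1 : r x • x ∈ N := by
          have := hr0 x
          rwa [← Submodule.Quotient.mk_smul, Submodule.Quotient.mk_eq_zero] at this
        have : a = (∏ y ∈ t.erase x, r y) * r x := by
          rw [ha, ← Finset.prod_erase_mul t r hx]
        rw [this, mul_smul]
        exact N.smul_mem _ h1
      have main : ∀ s : S, ∃ n : ℕ, a ^ n • s ∈ N := by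
        intro s
        have hs : s ∈ Algebra.adjoin R (t : Set S) := ht ▸ Algebra.mem_top
        induction hs using Algebra.adjoin_induction with
        | mem x hx => exact ⟨1, by simpa using haN x hx⟩
        | algebraMap r' =>
            refine ⟨0, ?_⟩
            rw [pow_zero, one_smul]
            exact ⟨r', rfl⟩
        | add x y hx hy ihx ihy =>
            obtain ⟨n, hn⟩ := ihx
            obtain ⟨m, hm⟩ := ihy
            refine ⟨n + m, ?_⟩
            have h1 : a ^ (n + m) • x ∈ N := by
              rw [pow_add, mul_comm, mul_smul]; exact N.smul_mem _ hn
            have h2 : a ^ (n + m) • y ∈ N := by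
              rw [pow_add, mul_smul]; exact N.smul_mem _ hm
            simpa [smul_add] using N.add_mem h1 h2
        | mul x y hx hy ihx ihy =>
            obtain ⟨n, hn⟩ := ihx
            obtain ⟨m, hm⟩ := ihy
            refine ⟨n + m, ?_⟩
            have : a ^ (n + m) • (x * y) = (a ^ n • x) * (a ^ m • y) := by
              rw [Algebra.smul_def, Algebra.smul_def, Algebra.smul_def, pow_add, map_mul]
              ring
            rw [this]
            exact hNmul _ _ hn hm
      intro m
      obtain ⟨s, rfl⟩ := Submodule.Quotient.mk_surjective N m
      obtain ⟨n, hn⟩ := main s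
      exact ⟨a ^ n, ⟨n, rfl⟩, by
        rw [← Submodule.Quotient.mk_smul, Submodule.Quotient.mk_eq_zero]; exact hn⟩
  have key2 : ∀ p : PrimeSpectrum R,
      (∃ a ∉ p.asIdeal, Subsingleton (LocalizedModule (Submonoid.powers a) (S ⧸ N))) →
      Subsingleton (LocalizedModule p.asIdeal.primeCompl (S ⧸ N)) := by
    rintro p ⟨a, hap, ha⟩
    rw [LocalizedModule.subsingleton_iff] at ha ⊢
    intro m
    obtain ⟨_, ⟨n, rfl⟩, hn⟩ := ha m
    exact ⟨a ^ n, p.asIdeal.primeCompl.pow_mem hap n, hn⟩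
  have keyiff : ∀ p : PrimeSpectrum R,
      Subsingleton (LocalizedModule p.asIdeal.primeCompl (S ⧸ N)) ↔
      ∃ a ∉ p.asIdeal, Subsingleton (LocalizedModule (Submonoid.powers a) (S ⧸ N)) :=
    fun p => ⟨key p, key2 p⟩
  refine ⟨?_, keyiff⟩
  ext p
  rw [← not_iff_not, Module.notMem_support_iff, keyiff p, PrimeSpectrum.mem_zeroLocus]
  simp only [odaSet, Set.subset_def, Set.mem_setOf_eq, SetLike.mem_coe, not_forall]
  constructor
  · rintro ⟨a, hap, ha⟩; exact ⟨a, ha, hap⟩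
  · rintro ⟨a, ha, hap⟩; exact ⟨a, hap, ha⟩
end

section
/- If an R-module E has a critical ideal J (i.e. J = √(ann(x)) for every nonzero x ∈ E), then J is a prime ideal, O(E) = J, and Supp(E) = V(J). -/
theorem critical_ideal_properties
    (R : Type*) [CommRing R] (E : Type*) [AddCommGroup E] [Module R E]
    [Nontrivial E] (J : Ideal R)
    (hJ : ∀ x : E, x ≠ 0 → (Ideal.torsionOf R E x).radical = J) :
    J.IsPrime ∧ odaSet R E = (J : Set R) ∧
      Module.support R E = PrimeSpectrum.zeroLocus (J : Set R) := by
  obtain ⟨x0, hx0⟩ := exists_ne (0 : E)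
  have hJx0 := hJ x0 hx0
  -- membership in J characterization
  have hmem : ∀ a : R, a ∈ J ↔ ∃ n : ℕ, a ^ n • x0 = 0 := by
    intro a
    rw [← hJx0, Ideal.mem_radical_iff]
    simp [Ideal.mem_torsionOf_iff]
  have hprime : J.IsPrime := by
    constructor
    · intro h
      have : (1 : R) ∈ J := h ▸ trivial
      obtain ⟨n, hn⟩ := (hmem 1).mp this
      simp at hn
      exact hx0 hn
    · intro a b hab
      by_cases ha : a ∈ J
      · exact Or.inl ha
      · right
        obtain ⟨n, hn⟩ := (hmem (a * b)).mp hab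
        have hy : a ^ n • x0 ≠ 0 := by
          intro h
          exact ha ((hmem a).mpr ⟨n, h⟩)
        rw [← hJ _ hy, Ideal.mem_radical_iff]
        refine ⟨n, ?_⟩
        rw [Ideal.mem_torsionOf_iff, smul_smul, mul_comm, ← mul_pow]
        exact hn
  refine ⟨hprime, ?_, ?_⟩
  · ext a
    simp only [odaSet, Set.mem_setOf_eq, SetLike.mem_coe,
      LocalizedModule.subsingleton_iff]
    constructor
    · intro h
      obtain ⟨r, ⟨n, rfl⟩, hr⟩ := h x0
      exact (hmem a).mpr ⟨n, hr⟩
    · intro ha m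
      by_cases hm : m = 0
      · exact ⟨1, ⟨0, pow_zero a⟩, by simp [hm]⟩
      · have : a ∈ (Ideal.torsionOf R E m).radical := (hJ m hm).symm ▸ ha
        obtain ⟨n, hn⟩ := Ideal.mem_radical_iff.mp this
        exact ⟨a ^ n, ⟨n, rfl⟩, (Ideal.mem_torsionOf_iff m _).mp hn⟩
  · ext P
    rw [Module.mem_support_iff_exists_annihilator, PrimeSpectrum.mem_zeroLocus]
    constructor
    · intro ⟨m, hm⟩
      have hann : Ideal.torsionOf R E m ≤ P.asIdeal := by
        intro r hr
        exact hm (by rwa [Submodule.mem_annihilator_span_singleton,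
          ← Ideal.mem_torsionOf_iff])
      have hm0 : m ≠ 0 := by
        rintro rfl
        have : (1 : R) ∈ P.asIdeal := hann (by simp [Ideal.mem_torsionOf_iff])
        exact P.isPrime.ne_top (Ideal.eq_top_iff_one _ |>.mpr this)
      calc (J : Set R) = ((Ideal.torsionOf R E m).radical : Set R) := by rw [hJ m hm0]
        _ ⊆ (P.asIdeal.radical : Set R) := Ideal.radical_mono hann
        _ = P.asIdeal := by rw [P.isPrime.radical]
    · intro hJP
      refine ⟨x0, fun r hr => ?_⟩
      rw [Submodule.mem_annihilator_span_singleton] at hr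
      exact hJP (by rw [← hJx0]; exact Ideal.le_radical ((Ideal.mem_torsionOf_iff x0 r).mpr hr))
end

section
/- For an R-module E and nonzero elements x, y ∈ E with x + y ≠ 0 such that M = √(ann x), N = √(ann y), P = √(ann(x+y)) are all prime, each of M, N, P contains the intersection of the other two, and at least two of M, N, P are equal. -/
private lemma torsionOf_inf_le {R : Type*} [CommRing R] {E : Type*} [AddCommGroup E]
    [Module R E] (a b : E) :
    Ideal.torsionOf R E a ⊓ Ideal.torsionOf R E b ≤ Ideal.torsionOf R E (a + b) := by
  intro r hr
  rw [Submodule.mem_inf] at hr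
  simp only [Ideal.mem_torsionOf_iff] at hr ⊢
  rw [smul_add, hr.1, hr.2, add_zero]

private lemma rad_inf_le {R : Type*} [CommRing R] {E : Type*} [AddCommGroup E]
    [Module R E] (a b : E) :
    (Ideal.torsionOf R E a).radical ⊓ (Ideal.torsionOf R E b).radical ≤
      (Ideal.torsionOf R E (a + b)).radical := by
  rw [← Ideal.radical_inf]
  exact Ideal.radical_mono (torsionOf_inf_le a b)

private lemma torsionOf_neg {R : Type*} [CommRing R] {E : Type*} [AddCommGroup E]
    [Module R E] (a : E) : Ideal.torsionOf R E (-a) = Ideal.torsionOf R E a := by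
  ext r; simp [Ideal.mem_torsionOf_iff]

theorem radical_torsionOf_triple
    (R : Type*) [CommRing R] (E : Type*) [AddCommGroup E] [Module R E]
    (x y : E) (hx : x ≠ 0) (hy : y ≠ 0) (hxy : x + y ≠ 0)
    (hM : ((Ideal.torsionOf R E x).radical).IsPrime)
    (hN : ((Ideal.torsionOf R E y).radical).IsPrime)
    (hP : ((Ideal.torsionOf R E (x + y)).radical).IsPrime) :
    ((Ideal.torsionOf R E x).radical ⊓ (Ideal.torsionOf R E y).radical ≤
        (Ideal.torsionOf R E (x + y)).radical ∧
      (Ideal.torsionOf R E y).radical ⊓ (Ideal.torsionOf R E (x + y)).radical ≤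
        (Ideal.torsionOf R E x).radical ∧
      (Ideal.torsionOf R E (x + y)).radical ⊓ (Ideal.torsionOf R E x).radical ≤
        (Ideal.torsionOf R E y).radical) ∧
    ((Ideal.torsionOf R E x).radical = (Ideal.torsionOf R E y).radical ∨
      (Ideal.torsionOf R E y).radical = (Ideal.torsionOf R E (x + y)).radical ∨
      (Ideal.torsionOf R E x).radical = (Ideal.torsionOf R E (x + y)).radical) := by
  have h1 := rad_inf_le (R := R) x y
  have h2 : (Ideal.torsionOf R E y).radical ⊓ (Ideal.torsionOf R E (x + y)).radical ≤
      (Ideal.torsionOf R E x).radical := by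
    have := rad_inf_le (R := R) (-y) (x + y)
    rw [torsionOf_neg] at this
    simpa [neg_add_cancel_left] using this
  have h3 : (Ideal.torsionOf R E (x + y)).radical ⊓ (Ideal.torsionOf R E x).radical ≤
      (Ideal.torsionOf R E y).radical := by
    have := rad_inf_le (R := R) (x + y) (-x)
    rw [torsionOf_neg] at this
    simpa [add_neg_cancel_comm] using this
  refine ⟨⟨h1, h2, h3⟩, ?_⟩
  rcases (Ideal.IsPrime.inf_le hP).mp h1 with hMP | hNP <;>
    rcases (Ideal.IsPrime.inf_le hM).mp h2 with hNM | hPM <;>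
    rcases (Ideal.IsPrime.inf_le hN).mp h3 with hPN | hMN
  · exact Or.inr (Or.inr (le_antisymm hMP (hPN.trans hNM)))
  · exact Or.inl (le_antisymm hMN hNM)
  · exact Or.inr (Or.inr (le_antisymm hMP hPM))
  · exact Or.inr (Or.inr (le_antisymm hMP hPM))
  · exact Or.inr (Or.inl (le_antisymm hNP hPN))
  · exact Or.inl (le_antisymm hMN hNM)
  · exact Or.inr (Or.inl (le_antisymm hNP hPN))
  · exact Or.inl (le_antisymm hMN (hNP.trans hPM))
end

section
/- Let R ⊂ S be an integral extension of commutative rings with conductor C = (R : S). If x ∈ S is integral over R, then √(R :_R x) = √(R :_R R[x]), where (R :_R R[x]) is the conductor of R in R[x]. -/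
theorem radical_denominator_eq_radical_conductor
    (R : Type*) [CommRing R] (S : Type*) [CommRing S] [Algebra R S]
    (hinj : Function.Injective (algebraMap R S))
    [Algebra.IsIntegral R S] (x : S) :
    (Ideal.torsionOf R (S ⧸ LinearMap.range (Algebra.linearMap R S))
        (Submodule.Quotient.mk x)).radical =
      ((Subalgebra.toSubmodule (Algebra.adjoin R ({x} : Set S))).map
          (LinearMap.range (Algebra.linearMap R S)).mkQ).annihilator.radical := by
  set Rm : Submodule R S := LinearMap.range (Algebra.linearMap R S) with hRm
  have hx : IsIntegral R x := Algebra.IsIntegral.isIntegral x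
  apply le_antisymm
  · rw [Ideal.radical_le_radical_iff]
    intro r hr
    rw [Ideal.mem_torsionOf_iff, ← Submodule.Quotient.mk_smul, Submodule.Quotient.mk_eq_zero]
      at hr
    -- hr : r • x ∈ Rm
    have key : ∀ z ∈ Algebra.adjoin R ({x} : Set S), ∃ n : ℕ, r ^ n • z ∈ Rm := by
      intro z hz
      induction hz using Algebra.adjoin_induction with
      | mem y hy =>
        rcases hy with rfl
        exact ⟨1, by simpa using hr⟩
      | algebraMap a => exact ⟨0, by simpa using ⟨a, rfl⟩⟩
      | add a b ha hb iha ihb =>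
        obtain ⟨n, hn⟩ := iha
        obtain ⟨m, hm⟩ := ihb
        refine ⟨max n m, ?_⟩
        have h1 : r ^ max n m • a ∈ Rm := by
          have : r ^ max n m • a = r ^ (max n m - n) • (r ^ n • a) := by
            rw [smul_smul, ← pow_add, Nat.sub_add_cancel (le_max_left n m)]
          rw [this]
          exact Rm.smul_mem _ hn
        have h2 : r ^ max n m • b ∈ Rm := by
          have : r ^ max n m • b = r ^ (max n m - m) • (r ^ m • b) := by
            rw [smul_smul, ← pow_add, Nat.sub_add_cancel (le_max_right n m)]
          rw [this]
          exact Rm.smul_mem _ hm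
        rw [smul_add]
        exact Rm.add_mem h1 h2
      | mul a b ha hb iha ihb =>
        obtain ⟨n, hn⟩ := iha
        obtain ⟨m, hm⟩ := ihb
        refine ⟨n + m, ?_⟩
        obtain ⟨c, hc⟩ := hn
        obtain ⟨d, hd⟩ := hm
        refine ⟨c * d, ?_⟩
        have : r ^ (n + m) • (a * b) = (r ^ n • a) * (r ^ m • b) := by
          rw [smul_mul_smul_comm, ← pow_add]
        simp only [Algebra.linearMap_apply] at hc hd ⊢
        rw [this, ← hc, ← hd, map_mul]
    -- uniform power using f.g.
    obtain ⟨t, ht⟩ := hx.fg_adjoin_singleton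
    have hmem : ∀ g ∈ t, g ∈ Algebra.adjoin R ({x} : Set S) := by
      intro g hg
      have : g ∈ Submodule.span R (t : Set S) := Submodule.subset_span hg
      rw [ht] at this
      exact this
    choose! n hn using fun g hg => key g (hmem g hg)
    set N : ℕ := t.sup n with hN
    have huniform : ∀ z ∈ Algebra.adjoin R ({x} : Set S), r ^ N • z ∈ Rm := by
      intro z hz
      have hz' : z ∈ Submodule.span R (t : Set S) := by rw [ht]; exact hz
      clear hz
      induction hz' using Submodule.span_induction with
      | mem g hg =>
        have hle : n g ≤ N := Finset.le_sup hg
        have : r ^ N • g = r ^ (N - n g) • (r ^ (n g) • g) := by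
          rw [smul_smul, ← pow_add, Nat.sub_add_cancel hle]
        rw [this]
        exact Rm.smul_mem _ (hn g hg)
      | zero => simp
      | add a b ha hb iha ihb =>
        rw [smul_add]
        exact Rm.add_mem iha ihb
      | smul c a ha iha =>
        rw [smul_comm]
        exact Rm.smul_mem _ iha
    refine ⟨N, ?_⟩
    rw [Submodule.mem_annihilator]
    rintro m ⟨z, hz, rfl⟩
    show r ^ N • Submodule.Quotient.mk z = 0
    rw [← Submodule.Quotient.mk_smul, Submodule.Quotient.mk_eq_zero]
    exact huniform z hz
  · rw [Ideal.radical_le_radical_iff]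
    intro r hr
    refine Ideal.le_radical ?_
    rw [Ideal.mem_torsionOf_iff]
    rw [Submodule.mem_annihilator] at hr
    exact hr _ ⟨x, Algebra.self_mem_adjoin_singleton R x, rfl⟩
end
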